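/- arXiv:1402.0423 — 5 statements merged into one kernel-verified Lean document; each statement's English description precedes it below -/
import Mathlib

section
/- (Gascuel–Caraux lower bound, first case) If 1 ≤ r ≤ k and r/k ≤ 1/2, then the expected value of the r-th order statistic satisfies E[X_{(r:k)}] ≥ μ − σ·√(k/(2r)). -/
/-! Put `q = (μ - X_(r:k))⁺`. At least `r` of the `Xᵢ` lie at or below `X_(r:k)` and
`x ↦ ((μ - x)⁺)²` is antitone, so `r q² ≤ ∑ᵢ ((μ - Xᵢ)⁺)²` pointwise. By the symmetry about `μ`
each term on the right has expectation `σ²/2`, hence `E q² ≤ kσ²/(2r)`, and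
`μ - E X_(r:k) ≤ E q ≤ √(E q²)`. -/

open MeasureTheory ProbabilityTheory

open Classical in
/-- The `r`-th order statistic (with `1 ≤ r ≤ k`) of `X₁, …, X_k` at a sample point `ω`:
the `(r−1)`-indexed entry of the sorted list `(X₁(ω), …, X_k(ω))`. -/
noncomputable def orderStat {Ω : Type*} {k : ℕ} (X : Fin k → Ω → ℝ) (r : ℕ) (ω : Ω) : ℝ :=
  ((List.ofFn fun i => X i ω).mergeSort (fun a b => decide (a ≤ b))).getD (r - 1) 0

theorem List.Pairwise.natCast_succ_mul_le_sum_map {α : Type*} [Preorder α] {g : α → ℝ}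
    (hg : Antitone g) (hg0 : ∀ x, 0 ≤ g x) :
    ∀ {L : List α}, L.Pairwise (· ≤ ·) → ∀ (i : ℕ) (hi : i < L.length),
      ((i : ℝ) + 1) * g L[i] ≤ (L.map g).sum
  | a :: L, _, 0, _ => by
      simpa using List.sum_nonneg (by simpa using fun x _ => hg0 x)
  | a :: L, hL, i + 1, hi => by
      have hi : i < L.length := by simpa using hi
      have ha : g L[i] ≤ g a := hg (List.rel_of_pairwise_cons hL (List.getElem_mem hi))
      have ih := hL.of_cons.natCast_succ_mul_le_sum_map hg hg0 i hi
      simp only [List.getElem_cons_succ, List.map_cons, List.sum_cons]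
      push_cast
      linarith

theorem natCast_mul_comp_orderStat_le_sum {Ω : Type*} {k r : ℕ} (X : Fin k → Ω → ℝ) (ω : Ω)
    {g : ℝ → ℝ} (hg : Antitone g) (hg0 : ∀ x, 0 ≤ g x) (hr1 : 1 ≤ r) (hrk : r ≤ k) :
    (r : ℝ) * g (orderStat X r ω) ≤ ∑ i, g (X i ω) := by
  set L := (List.ofFn fun i => X i ω).mergeSort (fun a b => decide (a ≤ b))
  have hsorted : L.Pairwise (· ≤ ·) := by
    refine (List.pairwise_mergeSort (fun a b c hab hbc => ?_) (fun a b => ?_) _).imp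
      (fun h => by simpa using h)
    · simpa using le_trans (by simpa using hab) (by simpa using hbc)
    · simpa using le_total a b
  have hi : r - 1 < L.length := by simp [L]; omega
  have hsum : ∑ i, g (X i ω) = (L.map g).sum := by
    rw [((List.mergeSort_perm _ _).map g).sum_eq, List.map_ofFn, List.sum_ofFn]
    rfl
  have key := hsorted.natCast_succ_mul_le_sum_map hg hg0 (r - 1) hi
  rw [hsum, orderStat, List.getD_eq_getElem _ _ hi]
  convert key using 2
  push_cast [hr1]
  ring

section Moments

variable {Ω : Type*} [MeasurableSpace Ω] {P : Measure Ω}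

theorem MeasureTheory.MemLp.integrable_posPart_sub_sq [IsFiniteMeasure P] {Y : Ω → ℝ}
    (hY : MemLp Y 2 P) (m : ℝ) : Integrable (fun ω => (m - Y ω)⁺ ^ 2) P :=
  ((memLp_const m).sub hY).pos_part.integrable_sq

theorem posPart_sq_add_posPart_neg_sq (a : ℝ) : a⁺ ^ 2 + (-a)⁺ ^ 2 = a ^ 2 := by
  rcases le_total a 0 with h | h
  · rw [posPart_eq_zero.2 h, posPart_eq_self.2 (neg_nonneg.2 h)]
    ring
  · rw [posPart_eq_self.2 h, posPart_eq_zero.2 (neg_nonpos.2 h)]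
    ring

theorem integral_posPart_sub_sq_of_identDistrib [IsFiniteMeasure P] {Y : Ω → ℝ} {m : ℝ}
    (hY : MemLp Y 2 P) (hsym : IdentDistrib (fun ω => 2 * m - Y ω) Y P P) :
    ∫ ω, (m - Y ω)⁺ ^ 2 ∂P = (∫ ω, (Y ω - m) ^ 2 ∂P) / 2 := by
  have hcont : Continuous fun x : ℝ => (m - x)⁺ ^ 2 := by fun_prop
  have hreflect : ∫ ω, (Y ω - m)⁺ ^ 2 ∂P = ∫ ω, (m - Y ω)⁺ ^ 2 ∂P := by
    have h := (hsym.comp hcont.measurable).integral_eq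
    simp only [Function.comp_def, show ∀ x, m - (2 * m - x) = x - m from fun x => by ring] at h
    exact h
  have hsplit : ∫ ω, (Y ω - m) ^ 2 ∂P
      = ∫ ω, (Y ω - m)⁺ ^ 2 ∂P + ∫ ω, (m - Y ω)⁺ ^ 2 ∂P := by
    rw [← integral_add]
    · congr with ω
      rw [← posPart_sq_add_posPart_neg_sq, neg_sub]
    · simpa only [Pi.neg_apply, neg_sub_neg] using hY.neg.integrable_posPart_sub_sq (-m)
    · exact hY.integrable_posPart_sub_sq m
  linarith

theorem sub_integral_le_sqrt_integral_posPart_sq [IsProbabilityMeasure P] {Z : Ω → ℝ} (m : ℝ)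
    (hZ : Integrable Z P) (hZ2 : Integrable (fun ω => (m - Z ω)⁺ ^ 2) P) :
    m - ∫ ω, Z ω ∂P ≤ √(∫ ω, (m - Z ω)⁺ ^ 2 ∂P) := by
  set q := fun ω => (m - Z ω)⁺
  have hq : Integrable q P := ((integrable_const m).sub hZ).pos_part
  have hqL2 : MemLp q 2 P := (memLp_two_iff_integrable_sq hq.aestronglyMeasurable).2 hZ2
  have hmono : m - ∫ ω, Z ω ∂P ≤ ∫ ω, q ω ∂P :=
    calc m - ∫ ω, Z ω ∂P = ∫ ω, (m - Z ω) ∂P := by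
          rw [integral_sub (integrable_const m) hZ, integral_const, probReal_univ, one_smul]
      _ ≤ ∫ ω, q ω ∂P := integral_mono ((integrable_const m).sub hZ) hq fun ω => le_posPart _
  have hjensen : (∫ ω, q ω ∂P) ^ 2 ≤ ∫ ω, q ω ^ 2 ∂P := by
    have := variance_nonneg q P
    rw [variance_eq_sub hqL2] at this
    simpa using this
  exact hmono.trans ((le_abs_self _).trans (Real.abs_le_sqrt hjensen))

end Moments

section OrderStatIntegral

variable {Ω : Type*} [MeasurableSpace Ω] {P : Measure Ω} {k r : ℕ} {X : Fin k → Ω → ℝ}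
  {g : ℝ → ℝ}

theorem integrable_comp_orderStat (hg : Antitone g) (hg0 : ∀ x, 0 ≤ g x)
    (hgX : ∀ i, Integrable (fun ω => g (X i ω)) P) (hX : AEMeasurable (orderStat X r) P)
    (hr1 : 1 ≤ r) (hrk : r ≤ k) : Integrable (fun ω => g (orderStat X r ω)) P := by
  refine (integrable_finsetSum Finset.univ fun i _ => hgX i).mono'
    (hg.measurable.comp_aemeasurable hX).aestronglyMeasurable (ae_of_all _ fun ω => ?_)
  rw [Real.norm_of_nonneg (hg0 _)]
  exact (le_mul_of_one_le_left (hg0 _) (by exact_mod_cast hr1)).trans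
    (natCast_mul_comp_orderStat_le_sum X ω hg hg0 hr1 hrk)

theorem natCast_mul_integral_comp_orderStat_le (hg : Antitone g) (hg0 : ∀ x, 0 ≤ g x)
    (hgX : ∀ i, Integrable (fun ω => g (X i ω)) P) (hX : AEMeasurable (orderStat X r) P)
    (hr1 : 1 ≤ r) (hrk : r ≤ k) :
    (r : ℝ) * ∫ ω, g (orderStat X r ω) ∂P ≤ ∑ i, ∫ ω, g (X i ω) ∂P := by
  rw [← integral_const_mul, ← integral_finsetSum _ fun i _ => hgX i]
  exact integral_mono ((integrable_comp_orderStat hg hg0 hgX hX hr1 hrk).const_mul _)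
    (integrable_finsetSum Finset.univ fun i _ => hgX i)
    fun ω => natCast_mul_comp_orderStat_le_sum X ω hg hg0 hr1 hrk

end OrderStatIntegral

theorem gascuel_caraux_lower_first_general {Ω : Type*} [MeasureSpace Ω]
    [IsProbabilityMeasure (volume : Measure Ω)]
    {k : ℕ} (X : Fin k → Ω → ℝ) (μ σ : ℝ) (hσ : 0 ≤ σ)
    (hL2 : ∀ i, MemLp (X i) 2 volume)
    (hmean : ∀ i, ∫ ω, X i ω = μ)
    (hvar : ∀ i, variance (X i) volume = σ ^ 2)
    (hsym : ∀ i, IdentDistrib (fun ω => 2 * μ - X i ω) (X i) volume volume)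
    (hint : ∀ r, Integrable (orderStat X r) volume)
    (r : ℕ) (hr1 : 1 ≤ r) (hrk : r ≤ k) :
    μ - σ * Real.sqrt ((k : ℝ) / (2 * (r : ℝ))) ≤ ∫ ω, orderStat X r ω := by
  set g : ℝ → ℝ := fun x => (μ - x)⁺ ^ 2
  have hg : Antitone g := fun x y hxy =>
    pow_le_pow_left₀ (posPart_nonneg _) (posPart_mono (by linarith)) 2
  have hg0 : ∀ x, 0 ≤ g x := fun x => sq_nonneg _
  have hgX_int : ∀ i, Integrable (fun ω => g (X i ω)) := fun i =>
    (hL2 i).integrable_posPart_sub_sq μ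
  have hgX : ∀ i, ∫ ω, g (X i ω) = σ ^ 2 / 2 := fun i => by
    rw [integral_posPart_sub_sq_of_identDistrib (hL2 i) (hsym i), ← hvar i,
      variance_eq_integral (hL2 i).aemeasurable, hmean i]
  have hmoment := natCast_mul_integral_comp_orderStat_le hg hg0 hgX_int
    (hint r).aemeasurable hr1 hrk
  simp only [hgX, Finset.sum_const, Finset.card_univ, Fintype.card_fin, nsmul_eq_mul] at hmoment
  calc μ - σ * √((k : ℝ) / (2 * r)) = μ - √((k : ℝ) / (2 * r) * σ ^ 2) := by
        rw [Real.sqrt_mul' _ (sq_nonneg σ), Real.sqrt_sq hσ, mul_comm]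
    _ ≤ μ - √(∫ ω, g (orderStat X r ω)) := by
        gcongr
        rw [div_mul_eq_mul_div, le_div_iff₀ (by positivity)]
        linarith
    _ ≤ ∫ ω, orderStat X r ω :=
        sub_le_comm.1 <| sub_integral_le_sqrt_integral_posPart_sq μ (hint r) <|
          integrable_comp_orderStat hg hg0 hgX_int (hint r).aemeasurable hr1 hrk

/-- Gascuel–Caraux lower bound, first case: if `1 ≤ r ≤ k` and `r/k ≤ 1/2`, then
`E[X_{(r:k)}] ≥ μ − σ·√(k/(2r))` for identically distributed, square-integrable
random variables with mean `μ`, variance `σ²`, and distribution symmetric about `μ`. -/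
theorem gascuel_caraux_lower_first {Ω : Type*} [MeasureSpace Ω]
    [IsProbabilityMeasure (volume : Measure Ω)]
    {k : ℕ} (hk : 1 ≤ k) (X : Fin k → Ω → ℝ) (μ σ : ℝ) (hσ : 0 ≤ σ)
    (hmeas : ∀ i, AEMeasurable (X i) volume)
    (hL2 : ∀ i, MemLp (X i) 2 volume)
    (hident : ∀ i j, IdentDistrib (X i) (X j) volume volume)
    (hmean : ∀ i, ∫ ω, X i ω = μ)
    (hvar : ∀ i, variance (X i) volume = σ ^ 2)
    (hsym : ∀ i, IdentDistrib (fun ω => 2 * μ - X i ω) (X i) volume volume)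
    (hint : ∀ r, Integrable (orderStat X r) volume)
    (r : ℕ) (hr1 : 1 ≤ r) (hrk : r ≤ k)
    (hhalf : (r : ℝ) / (k : ℝ) ≤ 1 / 2) :
    μ - σ * Real.sqrt ((k : ℝ) / (2 * (r : ℝ))) ≤ ∫ ω, orderStat X r ω :=
  gascuel_caraux_lower_first_general X μ σ hσ hL2 hmean hvar hsym hint r hr1 hrk
end

section
/- (Gascuel–Caraux upper bound, first case) If 1 ≤ r ≤ k and (r−1)/k ≥ 1/2, then the expected value of the r-th order statistic satisfies E[X_{(r:k)}] ≤ μ + σ·√(k/(2(k−r+1))). -/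
open MeasureTheory ProbabilityTheory

/-!
At least `k - r + 1` of the `Xᵢ` are `≥ X_{(r:k)}`, so for every threshold `t`,
`(k - r + 1) (X_{(r:k)} - t)⁺ ≤ ∑ᵢ (Xᵢ - t)⁺`, and taking expectations
`E X_{(r:k)} ≤ t + k / (k - r + 1) · E (X₁ - t)⁺`. Put `t = μ + a` and `Z = X₁ - μ`.
Since `(z - a)⁺ ≤ (z⁺)² / (4a)` and, by symmetry, `E (Z⁺)² = σ² / 2`, this gives
`E X_{(r:k)} ≤ μ + a + k σ² / (8 a (k - r + 1))`; minimising over `a > 0` gives the bound.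
-/

lemma cast_sub_cast_add_one_pos {k r : ℕ} (h : r ≤ k) : 0 < (k : ℝ) - r + 1 := by
  have : (r : ℝ) ≤ k := by exact_mod_cast h
  linarith

lemma orderStat_mul_le_sum {Ω : Type*} {k : ℕ} (X : Fin k → Ω → ℝ) {r : ℕ} (hr1 : 1 ≤ r)
    (hrk : r ≤ k) {f : ℝ → ℝ} (hf : Monotone f) (hf0 : ∀ x, 0 ≤ f x) (ω : Ω) :
    ((k : ℝ) - r + 1) * f (orderStat X r ω) ≤ ∑ i, f (X i ω) := by
  set l := (List.ofFn fun i => X i ω).mergeSort (fun a b => decide (a ≤ b))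
  have hlen : l.length = k := by simp [l]
  have hr : r - 1 < l.length := by omega
  have hdrop : ∀ x ∈ l.drop (r - 1), orderStat X r ω ≤ x := by
    have hsorted : (l.drop (r - 1)).Pairwise (· ≤ ·) := (List.pairwise_mergeSort' _ _).drop
    rw [List.drop_eq_getElem_cons hr] at hsorted ⊢
    rw [orderStat, List.getD_eq_getElem _ 0 hr]
    exact List.forall_mem_cons.2 ⟨le_rfl, fun x hx => List.rel_of_pairwise_cons hsorted hx⟩
  calc ((k : ℝ) - r + 1) * f (orderStat X r ω)
      = ((l.drop (r - 1)).map f).length • f (orderStat X r ω) := by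
        rw [List.length_map, List.length_drop, hlen, nsmul_eq_mul, Nat.cast_sub (by omega)]
        push_cast [hr1]
        ring
    _ ≤ ((l.drop (r - 1)).map f).sum :=
        List.card_nsmul_le_sum _ _ (List.forall_mem_map.2 fun x hx => hf (hdrop x hx))
    _ ≤ (l.map f).sum :=
        ((List.drop_sublist _ _).map f).sum_le_sum (by simp [hf0])
    _ = ∑ i, f (X i ω) := by
        rw [((List.mergeSort_perm _ _).map f).sum_eq, List.map_ofFn, List.sum_ofFn]
        rfl

lemma max_sub_le_sq_div {a : ℝ} (ha : 0 < a) (z : ℝ) :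
    max (z - a) 0 ≤ max z 0 ^ 2 / (4 * a) := by
  rcases le_total z 0 with h | h
  · rw [max_eq_right (by linarith)]
    positivity
  · refine max_le ?_ (by positivity)
    rw [max_eq_left h, le_div_iff₀ (by positivity)]
    -- `z² - 4a(z - a) = (z - 2a)²`
    nlinarith [sq_nonneg (z - 2 * a)]

lemma le_of_forall_le_add_sq_div {m s : ℝ} (hs : 0 ≤ s)
    (h : ∀ a, 0 < a → m ≤ a + s ^ 2 / (4 * a)) : m ≤ s := by
  rcases hs.eq_or_lt with rfl | hs
  · exact le_of_forall_pos_le_add fun a ha => by simpa using h a ha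
  · have := h (s / 2) (by positivity)
    rwa [show s / 2 + s ^ 2 / (4 * (s / 2)) = s by field_simp; ring] at this

section Integral

variable {Ω : Type*} [MeasurableSpace Ω] {P : Measure Ω}

lemma integral_orderStat_sub_le [IsProbabilityMeasure P] {k : ℕ} {X : Fin k → Ω → ℝ}
    (hX : ∀ i, Integrable (X i) P)
    {r : ℕ} (hr1 : 1 ≤ r) (hrk : r ≤ k) (hint : Integrable (orderStat X r) P) (t : ℝ) :
    ((k : ℝ) - r + 1) * ((∫ ω, orderStat X r ω ∂P) - t) ≤ ∑ i, ∫ ω, max (X i ω - t) 0 ∂P := by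
  have hpos_int : ∀ i, Integrable (fun ω => max (X i ω - t) 0) P :=
    fun i => ((hX i).sub (integrable_const t)).pos_part
  have hf : Monotone fun x : ℝ => max (x - t) 0 := fun x y hxy => by dsimp only; gcongr
  have hsub : (∫ ω, orderStat X r ω ∂P) - t = ∫ ω, (orderStat X r ω - t) ∂P := by
    rw [integral_sub hint (integrable_const t), integral_const, probReal_univ, one_smul]
  rw [hsub, ← integral_finsetSum _ fun i _ => hpos_int i, ← integral_const_mul]
  refine integral_mono ((hint.sub (integrable_const t)).const_mul _)
    (integrable_finsetSum _ fun i _ => hpos_int i) fun ω => ?_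
  calc ((k : ℝ) - r + 1) * (orderStat X r ω - t)
      ≤ ((k : ℝ) - r + 1) * max (orderStat X r ω - t) 0 := by
        gcongr
        · exact (cast_sub_cast_add_one_pos hrk).le
        · exact le_max_left _ _
    _ ≤ ∑ i, max (X i ω - t) 0 :=
        orderStat_mul_le_sum X hr1 hrk hf (fun _ => le_max_right _ _) ω

lemma integral_max_zero_sq_eq_half {Z : Ω → ℝ} (hZ : MemLp Z 2 P)
    (hsymm : IdentDistrib (fun ω => -Z ω) Z P P) :
    ∫ ω, max (Z ω) 0 ^ 2 ∂P = (∫ ω, Z ω ^ 2 ∂P) / 2 := by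
  have hneg : ∫ ω, max (-Z ω) 0 ^ 2 ∂P = ∫ ω, max (Z ω) 0 ^ 2 ∂P :=
    (hsymm.comp (show Measurable fun x : ℝ => max x 0 ^ 2 by fun_prop)).integral_eq
  have hsplit : ∀ z : ℝ, z ^ 2 = max z 0 ^ 2 + max (-z) 0 ^ 2 := fun z => by
    rcases le_total z 0 with h | h
    · rw [max_eq_right h, max_eq_left (neg_nonneg.2 h)]; ring
    · rw [max_eq_left h, max_eq_right (neg_nonpos.2 h)]; ring
  have hneg_int : Integrable (fun ω => max (-Z ω) 0 ^ 2) P := hZ.neg.pos_part.integrable_sq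
  rw [integral_congr_ae (ae_of_all _ fun ω => hsplit (Z ω)),
    integral_add hZ.pos_part.integrable_sq hneg_int, hneg]
  ring

lemma integral_max_sub_le {Z : Ω → ℝ} (hZ : MemLp Z 2 P)
    (hsymm : IdentDistrib (fun ω => -Z ω) Z P P)
    {a : ℝ} (ha : 0 < a) :
    ∫ ω, max (Z ω - a) 0 ∂P ≤ (∫ ω, Z ω ^ 2 ∂P) / (8 * a) := by
  have hdom : Integrable (fun ω => max (Z ω) 0 ^ 2 / (4 * a)) P :=
    hZ.pos_part.integrable_sq.div_const _
  have hint : Integrable (fun ω => max (Z ω - a) 0) P := by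
    refine hdom.mono' ?_ (ae_of_all _ fun ω => ?_)
    · exact ((hZ.aestronglyMeasurable.aemeasurable.sub_const a).max
        aemeasurable_const).aestronglyMeasurable
    · rw [Real.norm_of_nonneg (le_max_right _ _)]
      exact max_sub_le_sq_div ha _
  calc ∫ ω, max (Z ω - a) 0 ∂P ≤ ∫ ω, max (Z ω) 0 ^ 2 / (4 * a) ∂P :=
        integral_mono hint hdom fun ω => max_sub_le_sq_div ha _
    _ = (∫ ω, Z ω ^ 2 ∂P) / (8 * a) := by
        rw [integral_div, integral_max_zero_sq_eq_half hZ hsymm]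
        ring

lemma integral_orderStat_le_of_identDistrib [IsProbabilityMeasure P] {k : ℕ} {X : Fin k → Ω → ℝ}
    (hX : ∀ i, Integrable (X i) P)
    (hident : ∀ i j, IdentDistrib (X i) (X j) P P) {r : ℕ} (hr1 : 1 ≤ r) (hrk : r ≤ k)
    (hint : Integrable (orderStat X r) P) (i₀ : Fin k) (t : ℝ) :
    ∫ ω, orderStat X r ω ∂P ≤ t + k / ((k : ℝ) - r + 1) * ∫ ω, max (X i₀ ω - t) 0 ∂P := by
  have hD := cast_sub_cast_add_one_pos hrk
  have hsame : ∀ i, ∫ ω, max (X i ω - t) 0 ∂P = ∫ ω, max (X i₀ ω - t) 0 ∂P := fun i =>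
    ((hident i i₀).comp (show Measurable fun x : ℝ => max (x - t) 0 by fun_prop)).integral_eq
  have h := integral_orderStat_sub_le hX hr1 hrk hint t
  simp only [hsame, Finset.sum_const, Finset.card_univ, Fintype.card_fin, nsmul_eq_mul] at h
  rw [div_mul_eq_mul_div, ← sub_le_iff_le_add', le_div_iff₀ hD]
  linarith

lemma ProbabilityTheory.IdentDistrib.neg_sub_of_two_mul_sub {X : Ω → ℝ} {μ : ℝ}
    (h : IdentDistrib (fun ω => 2 * μ - X ω) X P P) :
    IdentDistrib (fun ω => -(X ω - μ)) (fun ω => X ω - μ) P P := by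
  convert h.comp (show Measurable fun x : ℝ => x - μ by fun_prop) using 1
  · funext ω
    simp only [Function.comp_apply]
    ring
  · rfl

end Integral

theorem gascuel_caraux_upper_first_general {Ω : Type*} [MeasureSpace Ω]
    [IsProbabilityMeasure (volume : Measure Ω)]
    {k : ℕ} (X : Fin k → Ω → ℝ) (μ σ : ℝ) (hσ : 0 ≤ σ)
    (hL2 : ∀ i, MemLp (X i) 2 volume)
    (hident : ∀ i j, IdentDistrib (X i) (X j) volume volume)
    (hmean : ∀ i, ∫ ω, X i ω = μ)
    (hvar : ∀ i, variance (X i) volume = σ ^ 2)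
    (hsym : ∀ i, IdentDistrib (fun ω => 2 * μ - X i ω) (X i) volume volume)
    (hint : ∀ r, Integrable (orderStat X r) volume)
    (r : ℕ) (hr1 : 1 ≤ r) (hrk : r ≤ k) :
    ∫ ω, orderStat X r ω ≤
      μ + σ * Real.sqrt ((k : ℝ) / (2 * ((k : ℝ) - (r : ℝ) + 1))) := by
  set i₀ : Fin k := ⟨0, hr1.trans hrk⟩
  set Z : Ω → ℝ := fun ω => X i₀ ω - μ
  set s := σ * Real.sqrt ((k : ℝ) / (2 * ((k : ℝ) - r + 1)))
  have hD := cast_sub_cast_add_one_pos hrk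
  have hZ : MemLp Z 2 := (hL2 i₀).sub (memLp_const μ)
  have hZsq : ∫ ω, Z ω ^ 2 = σ ^ 2 := by
    rw [← hvar i₀, variance_eq_integral (hL2 i₀).aestronglyMeasurable.aemeasurable, hmean i₀]
  have hZsymm : IdentDistrib (fun ω => -Z ω) Z := (hsym i₀).neg_sub_of_two_mul_sub
  have hs2 : s ^ 2 = σ ^ 2 * k / (2 * ((k : ℝ) - r + 1)) := by
    rw [mul_pow, Real.sq_sqrt (by positivity)]
    ring
  suffices (∫ ω, orderStat X r ω) - μ ≤ s by linarith
  refine le_of_forall_le_add_sq_div (by positivity) fun a ha => ?_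
  have htail : ∫ ω, max (X i₀ ω - (μ + a)) 0 ≤ σ ^ 2 / (8 * a) := by
    simpa only [Z, sub_sub, hZsq] using integral_max_sub_le hZ hZsymm ha
  calc (∫ ω, orderStat X r ω) - μ
      ≤ a + k / ((k : ℝ) - r + 1) * ∫ ω, max (X i₀ ω - (μ + a)) 0 := by
        linarith [integral_orderStat_le_of_identDistrib (fun i => (hL2 i).integrable one_le_two)
          hident hr1 hrk (hint r) i₀ (μ + a)]
    _ ≤ a + k / ((k : ℝ) - r + 1) * (σ ^ 2 / (8 * a)) := by gcongr
    _ = a + s ^ 2 / (4 * a) := by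
        rw [hs2]
        field_simp
        ring

/-- Gascuel–Caraux upper bound, first case: if `1 ≤ r ≤ k` and `(r−1)/k ≥ 1/2`, then
`E[X_{(r:k)}] ≤ μ + σ·√(k/(2(k−r+1)))`. -/
theorem gascuel_caraux_upper_first {Ω : Type*} [MeasureSpace Ω]
    [IsProbabilityMeasure (volume : Measure Ω)]
    {k : ℕ} (hk : 1 ≤ k) (X : Fin k → Ω → ℝ) (μ σ : ℝ) (hσ : 0 ≤ σ)
    (hmeas : ∀ i, AEMeasurable (X i) volume)
    (hL2 : ∀ i, MemLp (X i) 2 volume)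
    (hident : ∀ i j, IdentDistrib (X i) (X j) volume volume)
    (hmean : ∀ i, ∫ ω, X i ω = μ)
    (hvar : ∀ i, variance (X i) volume = σ ^ 2)
    (hsym : ∀ i, IdentDistrib (fun ω => 2 * μ - X i ω) (X i) volume volume)
    (hint : ∀ r, Integrable (orderStat X r) volume)
    (r : ℕ) (hr1 : 1 ≤ r) (hrk : r ≤ k)
    (hhalf : 1 / 2 ≤ ((r : ℝ) - 1) / (k : ℝ)) :
    ∫ ω, orderStat X r ω ≤
      μ + σ * Real.sqrt ((k : ℝ) / (2 * ((k : ℝ) - (r : ℝ) + 1))) :=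
  gascuel_caraux_upper_first_general X μ σ hσ hL2 hident hmean hvar hsym hint r hr1 hrk
end

section
/- (Gascuel–Caraux upper bound, second case) If 1 ≤ r ≤ k and (r−1)/k ≤ 1/2, then the expected value of the r-th order statistic satisfies E[X_{(r:k)}] ≤ μ + σ·√(k(r−1)/(2(k−r+1)²)). -/
/-
Write m = k − r + 1. At least m of the Xᵢ(ω) are ≥ X_{(r:k)}(ω), so
m (X_{(r:k)} − c) ≤ ∑ᵢ (Xᵢ − c)⁺ for every c, and after integrating,
m (E X_{(r:k)} − c) ≤ k E (X − c)⁺. Take c a p-quantile of X for p = (r − 1)/k and let w be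
the indicator of {X < c}, with the atom {X = c} weighted so that E w = p. Then
(X − c)⁺ = (μ − c)(1 − w) + (X − μ) + (μ − X) w, hence
E (X − c)⁺ ≤ (μ − c)(1 − p) + E[(μ − X)⁺ w], and Cauchy–Schwarz bounds the last term by
√(E[((μ − X)⁺)²]) √p = σ √(p / 2), the equality by the symmetry of X about μ.
Eliminating c gives the bound. (For r = 1, where p = 0, simply X_{(1:k)} ≤ X₁.)
-/

open MeasureTheory ProbabilityTheory

open Set Filter Topology

namespace List

theorem pairwise_mergeSort_le (l : List ℝ) :
    (l.mergeSort fun a b => decide (a ≤ b)).Pairwise (· ≤ ·) := by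
  simpa using pairwise_mergeSort (le := fun a b : ℝ => decide (a ≤ b))
    (fun _ _ _ => by simpa using le_trans) (fun a b => by simpa using le_total a b) l

theorem Pairwise.getD_zero_le {l : List ℝ} (hl : l.Pairwise (· ≤ ·)) {x : ℝ} (hx : x ∈ l) :
    l.getD 0 0 ≤ x := by
  cases l with
  | nil => simp at hx
  | cons a t =>
    rcases mem_cons.mp hx with rfl | hx
    · exact le_rfl
    · exact rel_of_pairwise_cons hl hx

theorem Pairwise.length_sub_mul_getD_sub_le {l : List ℝ} (hl : l.Pairwise (· ≤ ·)) (j : ℕ)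
    (c : ℝ) : ((l.length - j : ℕ) : ℝ) * (l.getD j 0 - c) ≤ (l.map fun x => max (x - c) 0).sum := by
  induction l generalizing j with
  | nil => simp
  | cons a t ih =>
    rw [pairwise_cons] at hl
    cases j with
    | zero =>
      have hsum := card_nsmul_le_sum (t.map fun x => max (x - c) 0) (a - c) fun y hy => by
        obtain ⟨x, hx, rfl⟩ := mem_map.mp hy
        exact (sub_le_sub_right (hl.1 x hx) c).trans (le_max_left _ _)
      simp only [length_map, length_cons, Nat.sub_zero, getD_cons_zero, map_cons, sum_cons,
        nsmul_eq_mul] at hsum ⊢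
      push_cast
      linarith [le_max_left (a - c) 0]
    | succ j =>
      simp only [length_cons, Nat.add_sub_add_right, getD_cons_succ, map_cons, sum_cons]
      linarith [ih hl.2 j, le_max_right (a - c) 0]

end List

section OrderStatistics

variable {Ω : Type*} {k : ℕ} (X : Fin k → Ω → ℝ)

theorem orderStat_one_le (i : Fin k) (ω : Ω) : orderStat X 1 ω ≤ X i ω :=
  (List.pairwise_mergeSort_le _).getD_zero_le <|
    (List.mergeSort_perm _ _).mem_iff.mpr (List.mem_ofFn.mpr ⟨i, rfl⟩)

theorem length_sub_mul_orderStat_sub_le {r : ℕ} (hr1 : 1 ≤ r) (hrk : r ≤ k) (c : ℝ) (ω : Ω) :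
    ((k : ℝ) - r + 1) * (orderStat X r ω - c) ≤ ∑ i, max (X i ω - c) 0 := by
  have key := (List.pairwise_mergeSort_le (List.ofFn fun i => X i ω)).length_sub_mul_getD_sub_le
    (r - 1) c
  rw [(List.mergeSort_perm _ _).map _ |>.sum_eq, List.map_ofFn, List.sum_ofFn] at key
  rw [List.length_mergeSort, List.length_ofFn, Nat.cast_sub (by omega), Nat.cast_sub hr1] at key
  simp only [Function.comp_apply] at key
  unfold orderStat
  convert key using 2
  ring

end OrderStatistics

theorem exists_measureReal_Iio_le_le_measureReal_Iic (ν : Measure ℝ) [IsProbabilityMeasure ν]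
    {p : ℝ} (hp0 : 0 < p) (hp1 : p < 1) : ∃ c, ν.real (Iio c) ≤ p ∧ p ≤ ν.real (Iic c) := by
  set F := cdf ν
  set S := {t | p ≤ F t}
  have hne : S.Nonempty := (((tendsto_order.1 (tendsto_cdf_atTop ν)).1 p hp1).exists).imp
    fun _ h => h.le
  have hbdd : BddBelow S := by
    obtain ⟨a, ha⟩ := eventually_atBot.mp ((tendsto_order.1 (tendsto_cdf_atBot ν)).2 p hp0)
    exact ⟨a, fun t ht => le_of_not_ge fun hta => (ha t hta).not_ge ht⟩
  have hlt : ∀ t < sInf S, F t < p := fun t ht =>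
    lt_of_not_ge fun hmem => (csInf_le hbdd hmem).not_gt ht
  refine ⟨sInf S, ?_, ?_⟩
  · have hIio : ν (Iio (sInf S)) = ENNReal.ofReal (Function.leftLim F (sInf S) - 0) := by
      conv_lhs => rw [← measure_cdf ν]
      exact F.measure_Iio (tendsto_cdf_atBot ν) _
    have hleft : Function.leftLim F (sInf S) ≤ p :=
      le_of_tendsto (F.mono.tendsto_leftLim _)
        (eventually_nhdsWithin_of_forall fun t ht => (hlt t ht).le)
    rw [measureReal_def, hIio, ENNReal.toReal_ofReal', sub_zero]
    exact max_le hleft hp0.le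
  · have hright : ∀ t > sInf S, p ≤ F t := fun t ht => by
      obtain ⟨s, hs, hst⟩ := (csInf_lt_iff hbdd hne).mp ht
      exact hs.trans (F.mono hst.le)
    rw [← cdf_eq_real]
    exact ge_of_tendsto ((F.right_continuous _).mono Ioi_subset_Ici_self)
      (eventually_nhdsWithin_of_forall hright)

theorem exists_weight_of_measureReal_Iio_le_le_measureReal_Iic (ν : Measure ℝ) [IsFiniteMeasure ν]
    {c p : ℝ} (hlo : ν.real (Iio c) ≤ p) (hhi : p ≤ ν.real (Iic c)) :
    ∃ w : ℝ → ℝ, Measurable w ∧ (∀ x, w x ∈ Icc 0 1) ∧ (∀ x < c, w x = 1) ∧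
      (∀ x, c < x → w x = 0) ∧ ∫ x, w x ∂ν = p := by
  rw [← Iio_union_right, measureReal_union (by simp) (measurableSet_singleton c)] at hhi
  obtain ⟨θ, hθ, hθp⟩ : ∃ θ ∈ Icc (0 : ℝ) 1, ν.real (Iio c) + θ * ν.real {c} = p :=
    intermediate_value_Icc zero_le_one (by fun_prop) ⟨by simpa using hlo, by simpa using hhi⟩
  refine ⟨fun x => (Iio c).indicator (fun _ => 1) x + ({c} : Set ℝ).indicator (fun _ => θ) x,
    (measurable_const.indicator measurableSet_Iio).add
      (measurable_const.indicator (measurableSet_singleton c)), fun x => ?_,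
    fun x hx => by simp [hx, hx.ne], fun x hx => by simp [hx.not_gt, hx.ne'], ?_⟩
  · rcases lt_trichotomy x c with hx | rfl | hx
    · simp [hx, hx.ne]
    · simpa using hθ
    · simp [hx.not_gt, hx.ne']
  · rw [integral_add ((integrable_const 1).indicator measurableSet_Iio)
      ((integrable_const θ).indicator (measurableSet_singleton c)),
      integral_indicator_const _ measurableSet_Iio,
      integral_indicator_const _ (measurableSet_singleton c)]
    simpa [mul_comm] using hθp

theorem integral_mul_le_sqrt_mul_sqrt {α : Type*} [MeasurableSpace α] {μ : Measure α}
    {f g : α → ℝ} (hf0 : 0 ≤ᵐ[μ] f) (hg0 : 0 ≤ᵐ[μ] g) (hf : MemLp f 2 μ) (hg : MemLp g 2 μ) :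
    ∫ a, f a * g a ∂μ ≤ √(∫ a, f a ^ 2 ∂μ) * √(∫ a, g a ^ 2 ∂μ) := by
  have := integral_mul_le_Lp_mul_Lq_of_nonneg Real.HolderConjugate.two_two hf0 hg0
    (by simpa using hf) (by simpa using hg)
  simpa [Real.sqrt_eq_rpow] using this

theorem two_mul_integral_sq_max_sub_eq {Ω : Type*} [MeasurableSpace Ω] {P : Measure Ω}
    [IsFiniteMeasure P] {Y : Ω → ℝ} {μ : ℝ} (hY : MemLp Y 2 P)
    (hsym : IdentDistrib (fun ω => 2 * μ - Y ω) Y P P) :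
    2 * ∫ ω, max (μ - Y ω) 0 ^ 2 ∂P = ∫ ω, (Y ω - μ) ^ 2 ∂P := by
  have hcentered : MemLp (fun ω => Y ω - μ) 2 P := hY.sub (memLp_const μ)
  have hmirror : ∫ ω, max (μ - Y ω) 0 ^ 2 ∂P = ∫ ω, max (Y ω - μ) 0 ^ 2 ∂P := by
    have := (hsym.comp (u := fun x => max (x - μ) 0 ^ 2) (by fun_prop)).integral_eq
    simpa only [Function.comp_def, show ∀ y, 2 * μ - y - μ = μ - y from fun y => by ring]
      using this
  have hsplit : ∀ ω, max (μ - Y ω) 0 ^ 2 + max (Y ω - μ) 0 ^ 2 = (Y ω - μ) ^ 2 := fun ω => by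
    rcases le_total (Y ω) μ with h | h
    · rw [max_eq_left (by linarith), max_eq_right (by linarith)]; ring
    · rw [max_eq_right (by linarith), max_eq_left (by linarith)]; ring
  rw [two_mul]
  nth_rewrite 2 [hmirror]
  rw [← integral_add (by simpa using hcentered.neg.pos_part.integrable_sq)
    hcentered.pos_part.integrable_sq]
  simp only [hsplit]

theorem integral_sub_mul_le_sqrt_variance_mul {Ω : Type*} [MeasurableSpace Ω] {P : Measure Ω}
    [IsFiniteMeasure P] {Y W : Ω → ℝ} {μ : ℝ} (hY : MemLp Y 2 P)
    (hsym : IdentDistrib (fun ω => 2 * μ - Y ω) Y P P) (hmean : ∫ ω, Y ω ∂P = μ)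
    (hW : MemLp W 2 P) (hW0 : 0 ≤ᵐ[P] W) :
    ∫ ω, (μ - Y ω) * W ω ∂P ≤ √(Var[Y; P] / 2) * √(∫ ω, W ω ^ 2 ∂P) := by
  have hlow : MemLp (fun ω => max (μ - Y ω) 0) 2 P := ((memLp_const μ).sub hY).pos_part
  calc ∫ ω, (μ - Y ω) * W ω ∂P ≤ ∫ ω, max (μ - Y ω) 0 * W ω ∂P := by
        refine integral_mono_ae (((memLp_const μ).sub hY).integrable_mul hW)
          (hlow.integrable_mul hW) ?_
        filter_upwards [hW0] with ω hω
        exact mul_le_mul_of_nonneg_right (le_max_left _ _) hω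
    _ ≤ √(∫ ω, max (μ - Y ω) 0 ^ 2 ∂P) * √(∫ ω, W ω ^ 2 ∂P) :=
        integral_mul_le_sqrt_mul_sqrt (ae_of_all _ fun _ => le_max_right _ _) hW0 hlow hW
    _ = √(Var[Y; P] / 2) * √(∫ ω, W ω ^ 2 ∂P) := by
        rw [variance_eq_integral hY.aestronglyMeasurable.aemeasurable, hmean,
          ← two_mul_integral_sq_max_sub_eq hY hsym, mul_div_cancel_left₀ _ two_ne_zero]

theorem exists_integral_max_sub_le {Ω : Type*} [MeasurableSpace Ω] {P : Measure Ω}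
    [IsProbabilityMeasure P] {Y : Ω → ℝ} {μ p : ℝ} (hY : MemLp Y 2 P)
    (hsym : IdentDistrib (fun ω => 2 * μ - Y ω) Y P P) (hmean : ∫ ω, Y ω ∂P = μ)
    (hp0 : 0 < p) (hp1 : p < 1) :
    ∃ c, ∫ ω, max (Y ω - c) 0 ∂P ≤ (μ - c) * (1 - p) + √(Var[Y; P] * p / 2) := by
  have hYm : AEMeasurable Y P := hY.aestronglyMeasurable.aemeasurable
  have : IsProbabilityMeasure (P.map Y) := Measure.isProbabilityMeasure_map hYm
  obtain ⟨c, hlo, hhi⟩ := exists_measureReal_Iio_le_le_measureReal_Iic (P.map Y) hp0 hp1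
  obtain ⟨w, hw, hw01, hw1, hw0, hwp⟩ :=
    exists_weight_of_measureReal_Iio_le_le_measureReal_Iic (P.map Y) hlo hhi
  refine ⟨c, ?_⟩
  set W := fun ω => w (Y ω)
  have hW : MemLp W 2 P := MemLp.of_bound (hw.comp_aemeasurable hYm).aestronglyMeasurable 1
    (ae_of_all _ fun ω => abs_le.mpr ⟨by linarith [(hw01 (Y ω)).1], (hw01 (Y ω)).2⟩)
  have hWi : Integrable W P := hW.integrable one_le_two
  have hWint : ∫ ω, W ω ∂P = p := by rw [← hwp, integral_map hYm hw.aestronglyMeasurable]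
  have hWsq : ∫ ω, W ω ^ 2 ∂P ≤ p := hWint ▸ integral_mono hW.integrable_sq hWi fun ω => by
    nlinarith [(hw01 (Y ω)).1, (hw01 (Y ω)).2]
  have hidentity : ∀ ω, max (Y ω - c) 0 = (μ - c) * (1 - W ω) + (Y ω - μ) + (μ - Y ω) * W ω :=
    fun ω => by
      rcases lt_trichotomy (Y ω) c with h | h | h
      · simp only [W, hw1 _ h, max_eq_right (by linarith : Y ω - c ≤ 0)]; ring
      · simp only [W, h, sub_self, max_self]; ring
      · simp only [W, hw0 _ h, max_eq_left (by linarith : 0 ≤ Y ω - c)]; ring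
  have hY1 : Integrable Y P := hY.integrable one_le_two
  have hA : Integrable (fun ω => (μ - c) * (1 - W ω)) P :=
    ((integrable_const 1).sub hWi).const_mul (μ - c)
  have hB : Integrable (fun ω => Y ω - μ) P := hY1.sub (integrable_const μ)
  have hC : Integrable (fun ω => (μ - Y ω) * W ω) P := ((memLp_const μ).sub hY).integrable_mul hW
  calc ∫ ω, max (Y ω - c) 0 ∂P
      = (μ - c) * (1 - p) + ∫ ω, (μ - Y ω) * W ω ∂P := by
        simp_rw [hidentity]
        rw [integral_add (f := fun ω => (μ - c) * (1 - W ω) + (Y ω - μ)) (hA.add hB) hC,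
          integral_add hA hB, integral_const_mul, integral_sub (integrable_const 1) hWi,
          integral_sub hY1 (integrable_const μ), hmean, hWint]
        simp
    _ ≤ (μ - c) * (1 - p) + √(Var[Y; P] / 2) * √p := by
        grw [integral_sub_mul_le_sqrt_variance_mul hY hsym hmean hW
          (ae_of_all _ fun ω => (hw01 (Y ω)).1), hWsq]
    _ = (μ - c) * (1 - p) + √(Var[Y; P] * p / 2) := by
        rw [← Real.sqrt_mul' _ hp0.le, div_mul_eq_mul_div]

theorem length_sub_mul_integral_orderStat_sub_le {Ω : Type*} [MeasurableSpace Ω]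
    {P : Measure Ω} [IsProbabilityMeasure P] {k : ℕ} {X : Fin k → Ω → ℝ} {i₀ : Fin k}
    (hX : Integrable (X i₀) P) (hident : ∀ i, IdentDistrib (X i) (X i₀) P P) {r : ℕ}
    (hint : Integrable (orderStat X r) P) (hr1 : 1 ≤ r) (hrk : r ≤ k) (c : ℝ) :
    ((k : ℝ) - r + 1) * (∫ ω, orderStat X r ω ∂P - c) ≤ k * ∫ ω, max (X i₀ ω - c) 0 ∂P := by
  have hpos : ∀ i, Integrable (fun ω => max (X i ω - c) 0) P :=
    fun i => (((hident i).integrable_iff.mpr hX).sub (integrable_const c)).pos_part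
  have hequal : ∀ i, ∫ ω, max (X i ω - c) 0 ∂P = ∫ ω, max (X i₀ ω - c) 0 ∂P := fun i =>
    ((hident i).comp (u := fun x => max (x - c) 0) (by fun_prop)).integral_eq
  calc ((k : ℝ) - r + 1) * (∫ ω, orderStat X r ω ∂P - c)
      = ∫ ω, ((k : ℝ) - r + 1) * (orderStat X r ω - c) ∂P := by
        rw [integral_const_mul, integral_sub hint (integrable_const c), integral_const]
        simp
    _ ≤ ∫ ω, ∑ i, max (X i ω - c) 0 ∂P :=
        integral_mono ((hint.sub (integrable_const c)).const_mul _)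
          (integrable_finsetSum _ fun i _ => hpos i) (length_sub_mul_orderStat_sub_le X hr1 hrk c)
    _ = k * ∫ ω, max (X i₀ ω - c) 0 ∂P := by
        simp [integral_finsetSum _ fun i _ => hpos i, hequal]

theorem div_mul_sqrt_div_div_two_eq {k m q : ℝ} (hk : 0 < k) (hm : 0 < m) (hq : 0 ≤ q) :
    k / m * √(q / k / 2) = √(k * q / (2 * m ^ 2)) := by
  rw [show k * q / (2 * m ^ 2) = (k / m) ^ 2 * (q / k / 2) by field_simp,
    Real.sqrt_mul' _ (by positivity), Real.sqrt_sq (by positivity)]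

theorem gascuel_caraux_upper_second_general {Ω : Type*} [MeasureSpace Ω]
    [IsProbabilityMeasure (volume : Measure Ω)]
    {k : ℕ} (X : Fin k → Ω → ℝ) (μ σ : ℝ) (hσ : 0 ≤ σ)
    (hL2 : ∀ i, MemLp (X i) 2 volume)
    (hident : ∀ i j, IdentDistrib (X i) (X j) volume volume)
    (hmean : ∀ i, ∫ ω, X i ω = μ)
    (hvar : ∀ i, variance (X i) volume = σ ^ 2)
    (hsym : ∀ i, IdentDistrib (fun ω => 2 * μ - X i ω) (X i) volume volume)
    (hint : ∀ r, Integrable (orderStat X r) volume)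
    (r : ℕ) (hr1 : 1 ≤ r) (hrk : r ≤ k) :
    ∫ ω, orderStat X r ω ≤
      μ + σ * Real.sqrt ((k : ℝ) * ((r : ℝ) - 1) / (2 * ((k : ℝ) - (r : ℝ) + 1) ^ 2)) := by
  let i₀ : Fin k := ⟨0, by omega⟩
  have hX : Integrable (X i₀) := (hL2 i₀).integrable one_le_two
  rcases hr1.eq_or_lt with rfl | hr2
  · calc ∫ ω, orderStat X 1 ω ≤ ∫ ω, X i₀ ω := integral_mono (hint 1) hX (orderStat_one_le X i₀)
      _ = μ := hmean i₀
      _ ≤ _ := le_add_of_nonneg_right (by positivity)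
  have hk : (0 : ℝ) < k := by exact_mod_cast (show 0 < k by omega)
  have hm : (0 : ℝ) < k - r + 1 := by linarith [(Nat.cast_le (α := ℝ)).mpr hrk]
  have hr : (1 : ℝ) < r := by exact_mod_cast hr2
  set p := ((r : ℝ) - 1) / k with hp
  have hkp : k * (1 - p) = k - r + 1 := by rw [hp]; field_simp; ring
  obtain ⟨c, hc⟩ := exists_integral_max_sub_le (hL2 i₀) (hsym i₀) (hmean i₀)
    (show 0 < p by positivity) (show p < 1 by rw [hp, div_lt_one hk]; linarith)
  rw [hvar i₀, mul_div_assoc, Real.sqrt_mul' _ (by positivity), Real.sqrt_sq hσ] at hc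
  have hE := length_sub_mul_integral_orderStat_sub_le hX (fun i => hident i i₀) (hint r) hr1 hrk c
  rw [← div_mul_sqrt_div_div_two_eq hk hm (by linarith), ← sub_le_iff_le_add',
    show σ * (k / (k - r + 1) * √(p / 2)) = σ * √(p / 2) * k / (k - r + 1) by ring,
    le_div_iff₀ hm]
  -- the terms in `c` cancel because `k (1 - p) = k - r + 1`
  linear_combination hE + mul_le_mul_of_nonneg_left hc hk.le + (μ - c) * hkp

/-- Gascuel–Caraux upper bound, second case: if `1 ≤ r ≤ k` and `(r−1)/k ≤ 1/2`, then
`E[X_{(r:k)}] ≤ μ + σ·√(k(r−1)/(2(k−r+1)²))`. -/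
theorem gascuel_caraux_upper_second {Ω : Type*} [MeasureSpace Ω]
    [IsProbabilityMeasure (volume : Measure Ω)]
    {k : ℕ} (hk : 1 ≤ k) (X : Fin k → Ω → ℝ) (μ σ : ℝ) (hσ : 0 ≤ σ)
    (hmeas : ∀ i, AEMeasurable (X i) volume)
    (hL2 : ∀ i, MemLp (X i) 2 volume)
    (hident : ∀ i j, IdentDistrib (X i) (X j) volume volume)
    (hmean : ∀ i, ∫ ω, X i ω = μ)
    (hvar : ∀ i, variance (X i) volume = σ ^ 2)
    (hsym : ∀ i, IdentDistrib (fun ω => 2 * μ - X i ω) (X i) volume volume)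
    (hint : ∀ r, Integrable (orderStat X r) volume)
    (r : ℕ) (hr1 : 1 ≤ r) (hrk : r ≤ k)
    (hhalf : ((r : ℝ) - 1) / (k : ℝ) ≤ 1 / 2) :
    ∫ ω, orderStat X r ω ≤
      μ + σ * Real.sqrt ((k : ℝ) * ((r : ℝ) - 1) / (2 * ((k : ℝ) - (r : ℝ) + 1) ^ 2)) :=
  gascuel_caraux_upper_second_general X μ σ hσ hL2 hident hmean hvar hsym hint r hr1 hrk
end

section
/- (Lower bound on the expected sum of the m smallest order statistics) If 1 ≤ m ≤ k and 2m ≤ k, then the expected value of Y* = ∑_{r=1}^{m} X_{(r:k)} satisfies E[Y*] ≥ m·μ − (σ·√(2k)/2)·(2√m − 1). -/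
open MeasureTheory ProbabilityTheory

/-! Summing the Gascuel–Caraux bounds over `r ≤ m` costs `σ √(2k) / 2 · ∑_{r ≤ m} r^{-1/2}`, and the
tangent-line estimate `1/√(x+1) ≤ 2 (√(x+1) − √x)` telescopes to `∑_{r ≤ m} r^{-1/2} ≤ 2√m − 1`. -/

lemma inv_sqrt_add_one_le_two_mul_sub {x : ℝ} (hx : 0 ≤ x) :
    (√(x + 1))⁻¹ ≤ 2 * (√(x + 1) - √x) := by
  have hpos : 0 < √(x + 1) := Real.sqrt_pos.mpr (by linarith)
  have hsq : √(x + 1) ^ 2 = x + 1 := Real.sq_sqrt (by linarith)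
  have hsq' : √x ^ 2 = x := Real.sq_sqrt hx
  rw [inv_le_iff_one_le_mul₀' hpos]
  nlinarith [sq_nonneg (√(x + 1) - √x)]

lemma sum_Icc_inv_sqrt_le (m : ℕ) (hm : 1 ≤ m) :
    ∑ r ∈ Finset.Icc 1 m, (√(r : ℝ))⁻¹ ≤ 2 * √(m : ℝ) - 1 := by
  induction m, hm using Nat.le_induction with
  | base => norm_num
  | succ n hn ih =>
    rw [Finset.sum_Icc_succ_top (by omega)]
    have := inv_sqrt_add_one_le_two_mul_sub (Nat.cast_nonneg (α := ℝ) n)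
    push_cast
    linarith

lemma sqrt_div_two_mul_eq (k : ℝ) {r : ℝ} (hr : 0 ≤ r) :
    √(k / (2 * r)) = √(2 * k) / 2 * (√r)⁻¹ := by
  rw [show k / (2 * r) = 2 * k / (4 * r) by ring, Real.sqrt_div' _ (by positivity),
    Real.sqrt_mul' _ hr, show (4 : ℝ) = 2 ^ 2 by norm_num, Real.sqrt_sq zero_le_two]
  ring

theorem expected_sum_smallest_lower_bound_general {Ω : Type*} [MeasureSpace Ω]
    [IsProbabilityMeasure (volume : Measure Ω)]
    {k : ℕ} (X : Fin k → Ω → ℝ) (μ σ : ℝ) (hσ : 0 ≤ σ)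
    (hint : ∀ r, Integrable (orderStat X r) volume)
    (hGC : ∀ r : ℕ, 1 ≤ r → 2 * r ≤ k →
      μ - σ * Real.sqrt ((k : ℝ) / (2 * (r : ℝ))) ≤ ∫ ω, orderStat X r ω)
    (m : ℕ) (hm1 : 1 ≤ m) (hm2 : 2 * m ≤ k) :
    (m : ℝ) * μ - σ * Real.sqrt (2 * (k : ℝ)) / 2 * (2 * Real.sqrt (m : ℝ) - 1) ≤
      ∫ ω, ∑ r ∈ Finset.Icc 1 m, orderStat X r ω := by
  rw [integral_finsetSum _ fun r _ => hint r]
  calc (m : ℝ) * μ - σ * √(2 * k) / 2 * (2 * √m - 1)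
      ≤ m * μ - σ * √(2 * k) / 2 * ∑ r ∈ Finset.Icc 1 m, (√(r : ℝ))⁻¹ := by
        gcongr
        exact sum_Icc_inv_sqrt_le m hm1
    _ = ∑ r ∈ Finset.Icc 1 m, (μ - σ * √((k : ℝ) / (2 * r))) := by
        simp only [sqrt_div_two_mul_eq _ (Nat.cast_nonneg _), Finset.sum_sub_distrib,
          Finset.sum_const, Nat.card_Icc, Nat.add_sub_cancel, nsmul_eq_mul, Finset.mul_sum]
        ring_nf
    _ ≤ ∑ r ∈ Finset.Icc 1 m, ∫ ω, orderStat X r ω :=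
        Finset.sum_le_sum fun r hr => hGC r (Finset.mem_Icc.mp hr).1
          (by have := (Finset.mem_Icc.mp hr).2; omega)

/-- Lower bound on the expected sum of the `m` smallest order statistics: if `1 ≤ m ≤ k`
and `2m ≤ k`, then `E[∑_{r=1}^{m} X_{(r:k)}] ≥ m·μ − (σ·√(2k)/2)·(2√m − 1)`.
The Gascuel–Caraux per-term lower bound is taken as a hypothesis. -/
theorem expected_sum_smallest_lower_bound {Ω : Type*} [MeasureSpace Ω]
    [IsProbabilityMeasure (volume : Measure Ω)]
    {k : ℕ} (hk : 1 ≤ k) (X : Fin k → Ω → ℝ) (μ σ : ℝ) (hσ : 0 ≤ σ)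
    (hmeas : ∀ i, AEMeasurable (X i) volume)
    (hL2 : ∀ i, MemLp (X i) 2 volume)
    (hident : ∀ i j, IdentDistrib (X i) (X j) volume volume)
    (hmean : ∀ i, ∫ ω, X i ω = μ)
    (hvar : ∀ i, variance (X i) volume = σ ^ 2)
    (hsym : ∀ i, IdentDistrib (fun ω => 2 * μ - X i ω) (X i) volume volume)
    (hint : ∀ r, Integrable (orderStat X r) volume)
    (hGC : ∀ r : ℕ, 1 ≤ r → 2 * r ≤ k →
      μ - σ * Real.sqrt ((k : ℝ) / (2 * (r : ℝ))) ≤ ∫ ω, orderStat X r ω)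
    (m : ℕ) (hm1 : 1 ≤ m) (hmk : m ≤ k) (hm2 : 2 * m ≤ k) :
    (m : ℝ) * μ - σ * Real.sqrt (2 * (k : ℝ)) / 2 * (2 * Real.sqrt (m : ℝ) - 1) ≤
      ∫ ω, ∑ r ∈ Finset.Icc 1 m, orderStat X r ω :=
  expected_sum_smallest_lower_bound_general X μ σ hσ hint hGC m hm1 hm2
end

section
/- For real numbers μ, σ with σ ≥ 0 and natural numbers ℓ, k with 1 ≤ ℓ ≤ k, the sum of the per-term Gascuel–Caraux upper bounds satisfies ∑_{r=k−ℓ+1}^{k} (μ + σ·√(k/(2(k−r+1)))) ≤ ℓ·μ + (σ·√(2k)/2)·(2√ℓ − 1). -/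
/-! Reversing the order of summation (`j = k - r + 1`) turns the sum into
`ℓ μ + σ √(2k)/2 · ∑_{j=1}^{ℓ} 1/√j`, and `1/√j ≤ 2(√j - √(j-1))` makes the last sum telescope
to at most `2√ℓ - 1`. -/

open Finset Real

theorem one_div_sqrt_add_one_le {x : ℝ} (hx : 0 ≤ x) : 1 / √(x + 1) ≤ 2 * (√(x + 1) - √x) := by
  have hpos : 0 < √(x + 1) := sqrt_pos.2 (by linarith)
  have hsq : √(x + 1) ^ 2 = x + 1 := sq_sqrt (by linarith)
  have hsq' : √x ^ 2 = x := sq_sqrt hx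
  rw [div_le_iff₀ hpos]
  nlinarith [sq_nonneg (√(x + 1) - √x)]

theorem sum_Icc_one_div_sqrt_le {n : ℕ} (hn : 1 ≤ n) :
    ∑ j ∈ Icc 1 n, 1 / √(j : ℝ) ≤ 2 * √(n : ℝ) - 1 := by
  induction n, hn using Nat.le_induction with
  | base => norm_num
  | succ n _ ih =>
    rw [sum_Icc_succ_top (by omega), Nat.cast_succ]
    linarith [one_div_sqrt_add_one_le (Nat.cast_nonneg (α := ℝ) n)]

theorem sum_Icc_reflect {M : Type*} [AddCommMonoid M] (f : ℕ → M) {ℓ k : ℕ} (h : ℓ ≤ k) :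
    ∑ r ∈ Icc (k - ℓ + 1) k, f (k + 1 - r) = ∑ j ∈ Icc 1 ℓ, f j := by
  refine sum_nbij' (fun r ↦ k + 1 - r) (fun j ↦ k + 1 - j) ?_ ?_ ?_ ?_ (fun _ _ ↦ rfl) <;>
    intro i hi <;> simp only [mem_Icc] at hi ⊢ <;> omega

theorem sqrt_div_two_mul (a : ℝ) {x : ℝ} (hx : 0 ≤ x) :
    √(a / (2 * x)) = √(2 * a) / 2 * (1 / √x) := by
  have h : a / (2 * x) = 2 * a / (2 * √x) ^ 2 := by
    rw [mul_pow, sq_sqrt hx]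
    ring
  rw [h, sqrt_div' _ (by positivity), sqrt_sq (by positivity)]
  ring

/-- For real `μ, σ` with `σ ≥ 0` and natural numbers `ℓ, k` with `1 ≤ ℓ ≤ k`, the sum of the
per-term Gascuel–Caraux upper bounds satisfies
`∑_{r=k−ℓ+1}^{k} (μ + σ·√(k/(2(k−r+1)))) ≤ ℓ·μ + (σ·√(2k)/2)·(2√ℓ − 1)`. -/
theorem sum_gascuel_caraux_upper_bounds (μ σ : ℝ) (hσ : 0 ≤ σ) (ℓ k : ℕ)
    (hℓ : 1 ≤ ℓ) (hℓk : ℓ ≤ k) :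
    ∑ r ∈ Finset.Icc (k - ℓ + 1) k, (μ + σ * Real.sqrt ((k : ℝ) / (2 * ((k : ℝ) - (r : ℝ) + 1)))) ≤
      (ℓ : ℝ) * μ + σ * Real.sqrt (2 * (k : ℝ)) / 2 * (2 * Real.sqrt (ℓ : ℝ) - 1) := by
  have hcard : #(Icc (k - ℓ + 1) k) = ℓ := by simp only [Nat.card_Icc]; omega
  have hreflect : ∑ r ∈ Icc (k - ℓ + 1) k, √((k : ℝ) / (2 * ((k : ℝ) - r + 1))) =
      ∑ j ∈ Icc 1 ℓ, √((k : ℝ) / (2 * j)) := by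
    rw [← sum_Icc_reflect (fun j : ℕ ↦ √((k : ℝ) / (2 * j))) hℓk]
    refine sum_congr rfl fun r hr ↦ ?_
    rw [mem_Icc] at hr
    rw [Nat.cast_sub (by omega)]
    push_cast
    ring_nf
  have hbound : ∑ j ∈ Icc 1 ℓ, √((k : ℝ) / (2 * j)) ≤ √(2 * (k : ℝ)) / 2 * (2 * √(ℓ : ℝ) - 1) := by
    simp_rw [sqrt_div_two_mul _ (Nat.cast_nonneg _), ← mul_sum]
    exact mul_le_mul_of_nonneg_left (sum_Icc_one_div_sqrt_le hℓ) (by positivity)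
  rw [sum_add_distrib, sum_const, hcard, nsmul_eq_mul, ← mul_sum, hreflect]
  linear_combination mul_le_mul_of_nonneg_left hbound hσ
end
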